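/- Suppose two lower triangular 2×2 block operator matrices satisfy [[P*,Q*],[0,R*]]·[[P,0],[Q,R]] = [[P̃*,Q̃*],[0,R̃*]]·[[P̃,0],[Q̃,R̃]], and suppose ran Q ⊆ closure(ran R). Then there is a unique isometry V = [[V₁₁,0],[V₂₁,V₂₂]] (lower triangular) defined on closure(ran P) ⊕ closure(ran R) such that [[P̃,0],[Q̃,R̃]] = V·[[P,0],[Q,R]]. -/

import Mathlib

/-!
Comparing the entries of the two operator products gives `‖R' y‖ = ‖R y‖`,
`⟪Q x, R y⟫ = ⟪Q' x, R' y⟫` and `‖P x‖² + ‖Q x‖² = ‖P' x‖² + ‖Q' x‖²`. The first yields an isometry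
`V₂₂` on `closure (ran R)` with `V₂₂ R = R'`. As `ran Q ⊆ closure (ran R)`, the second says
`V₂₂* Q' = Q`, so `D := Q' - V₂₂ Q` takes values orthogonal to `ran V₂₂` and
`‖Q' x‖² = ‖D x‖² + ‖Q x‖²`. With the third, `‖P' x‖² + ‖D x‖² = ‖P x‖²`, so `x ↦ (P' x, D x)`
factors through `P` as a column isometry `(V₁₁, V₂₁)` on `closure (ran P)`, and orthogonality makes
`[[V₁₁, 0], [V₂₁, V₂₂]]` an isometry. Uniqueness holds because the three equations fix `V₂₂` on
`ran R`, and then `V₁₁` and `V₂₁` on `ran P`.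
-/

open ContinuousLinearMap

open scoped InnerProductSpace

namespace ContinuousLinearMap

section RangeClosure

variable {𝕜 E F : Type*} [NormedField 𝕜] [SeminormedAddCommGroup E] [NormedSpace 𝕜 E]
  [SeminormedAddCommGroup F] [NormedSpace 𝕜 F]

def rangeClosureRestrict (T : E →L[𝕜] F) :
    E →L[𝕜] (LinearMap.range (T : E →ₗ[𝕜] F)).topologicalClosure :=
  T.codRestrict _ fun x => Submodule.le_topologicalClosure _ (LinearMap.mem_range_self _ x)

theorem denseRange_rangeClosureRestrict (T : E →L[𝕜] F) : DenseRange T.rangeClosureRestrict := by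
  refine Topology.IsInducing.subtypeVal.dense_iff.2 fun u => ?_
  have hu : (u : F) ∈ closure (Set.range T) := by
    simpa only [Submodule.topologicalClosure_coe, LinearMap.coe_range, coe_coe] using u.2
  rwa [← Set.range_comp]

end RangeClosure

section Extension

variable {𝕜 E Eₗ F G : Type*} [NormedField 𝕜] [SeminormedAddCommGroup E] [NormedSpace 𝕜 E]
  [SeminormedAddCommGroup Eₗ] [NormedSpace 𝕜 Eₗ]
  [NormedAddCommGroup F] [NormedSpace 𝕜 F] [CompleteSpace F]
  [NormedAddCommGroup G] [NormedSpace 𝕜 G] [CompleteSpace G]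
  {e : E →L[𝕜] Eₗ}

theorem exists_linearIsometry_comp_eq_of_norm_eq (he : DenseRange e) (f : E →L[𝕜] F)
    (hf : ∀ x, ‖f x‖ = ‖e x‖) : ∃ W : Eₗ →ₗᵢ[𝕜] F, ∀ x, W (e x) = f x := by
  set W : Eₗ →L[𝕜] F := (f : E →ₗ[𝕜] F).extendOfNorm e
  have hW : ∀ x, W (e x) = f x :=
    LinearMap.extendOfNorm_eq he ⟨1, fun x => (hf x).trans_le (one_mul _).ge⟩
  have hWnorm : ∀ u, ‖W u‖ = ‖u‖ := fun u =>
    he.induction_on u (isClosed_eq (by fun_prop) (by fun_prop)) fun x => by rw [hW, hf]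
  exact ⟨⟨W, hWnorm⟩, hW⟩

theorem exists_comp_eq_of_norm_sq_add_norm_sq_eq (he : DenseRange e) (f : E →L[𝕜] F)
    (g : E →L[𝕜] G) (hfg : ∀ x, ‖f x‖ ^ 2 + ‖g x‖ ^ 2 = ‖e x‖ ^ 2) :
    ∃ (A : Eₗ →L[𝕜] F) (B : Eₗ →L[𝕜] G), (∀ x, A (e x) = f x) ∧ (∀ x, B (e x) = g x) ∧
      ∀ u, ‖A u‖ ^ 2 + ‖B u‖ ^ 2 = ‖u‖ ^ 2 := by
  have hbound : ∀ x, ‖f x‖ ≤ 1 * ‖e x‖ ∧ ‖g x‖ ≤ 1 * ‖e x‖ := fun x => by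
    rw [one_mul]
    constructor <;> nlinarith [hfg x, norm_nonneg (f x), norm_nonneg (g x), norm_nonneg (e x)]
  have hA : ∀ x, (f : E →ₗ[𝕜] F).extendOfNorm e (e x) = f x :=
    LinearMap.extendOfNorm_eq he ⟨1, fun x => (hbound x).1⟩
  have hB : ∀ x, (g : E →ₗ[𝕜] G).extendOfNorm e (e x) = g x :=
    LinearMap.extendOfNorm_eq he ⟨1, fun x => (hbound x).2⟩
  refine ⟨_, _, hA, hB,
    fun u => he.induction_on u (isClosed_eq (by fun_prop) (by fun_prop)) fun x => ?_⟩
  rw [hA, hB, hfg]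

end Extension

section Adjoint

variable {𝕜 E F F' G G' : Type*} [RCLike 𝕜]
  [NormedAddCommGroup E] [InnerProductSpace 𝕜 E] [CompleteSpace E]
  [NormedAddCommGroup F] [InnerProductSpace 𝕜 F] [CompleteSpace F]
  [NormedAddCommGroup F'] [InnerProductSpace 𝕜 F'] [CompleteSpace F']
  [NormedAddCommGroup G] [InnerProductSpace 𝕜 G] [CompleteSpace G]
  [NormedAddCommGroup G'] [InnerProductSpace 𝕜 G'] [CompleteSpace G']

theorem inner_apply_apply_eq_of_adjoint_comp_eq {E' : Type*} [NormedAddCommGroup E']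
    [InnerProductSpace 𝕜 E'] {A : E →L[𝕜] F} {B : E' →L[𝕜] F}
    {A' : E →L[𝕜] F'} {B' : E' →L[𝕜] F'} (h : A.adjoint ∘L B = A'.adjoint ∘L B') (x : E)
    (y : E') : ⟪A x, B y⟫_𝕜 = ⟪A' x, B' y⟫_𝕜 := by
  rw [← adjoint_inner_right, ← comp_apply, h, comp_apply, adjoint_inner_right]

theorem norm_apply_eq_of_adjoint_comp_self_eq {A : E →L[𝕜] F} {A' : E →L[𝕜] F'}
    (h : A.adjoint ∘L A = A'.adjoint ∘L A') (x : E) : ‖A x‖ = ‖A' x‖ := by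
  rw [@norm_eq_sqrt_re_inner 𝕜, @norm_eq_sqrt_re_inner 𝕜,
    inner_apply_apply_eq_of_adjoint_comp_eq h]

theorem norm_sq_add_norm_sq_eq_of_adjoint_comp_add_eq {A : E →L[𝕜] F} {B : E →L[𝕜] G}
    {A' : E →L[𝕜] F'} {B' : E →L[𝕜] G'}
    (h : A.adjoint ∘L A + B.adjoint ∘L B = A'.adjoint ∘L A' + B'.adjoint ∘L B') (x : E) :
    ‖A x‖ ^ 2 + ‖B x‖ ^ 2 = ‖A' x‖ ^ 2 + ‖B' x‖ ^ 2 := by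
  simpa only [apply_norm_sq_eq_inner_adjoint_left, ← map_add, ← inner_add_left, ← add_apply]
    using congrArg (fun S => RCLike.re ⟪S x, x⟫_𝕜) h

end Adjoint

end ContinuousLinearMap

namespace LinearIsometry

variable {𝕜 S G : Type*} [RCLike 𝕜] [NormedAddCommGroup S] [InnerProductSpace 𝕜 S]
  [NormedAddCommGroup G] [InnerProductSpace 𝕜 G] (V : S →ₗᵢ[𝕜] G) {q : S} {q' : G}

theorem inner_sub_map_map_eq_zero (h : ∀ w, ⟪q, w⟫_𝕜 = ⟪q', V w⟫_𝕜) (w : S) :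
    ⟪q' - V q, V w⟫_𝕜 = 0 := by
  rw [inner_sub_left, ← h, V.inner_map_map, sub_self]

theorem norm_sq_eq_norm_sub_map_sq_add_norm_sq (h : ∀ w, ⟪q, w⟫_𝕜 = ⟪q', V w⟫_𝕜) :
    ‖q'‖ ^ 2 = ‖q' - V q‖ ^ 2 + ‖q‖ ^ 2 := by
  have := norm_add_sq_eq_norm_sq_add_norm_sq_of_inner_eq_zero _ _
    (V.inner_sub_map_map_eq_zero h q)
  simpa only [sq, sub_add_cancel, V.norm_map] using this

end LinearIsometry

theorem lowerTriangular_ext {R E₁ E₂ S₁ S₂ G₁ G₂ : Type*} [Semiring R]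
    [TopologicalSpace S₁] [AddCommMonoid S₁] [Module R S₁]
    [TopologicalSpace S₂] [AddCommMonoid S₂] [Module R S₂]
    [TopologicalSpace G₁] [AddCommMonoid G₁] [Module R G₁] [T2Space G₁]
    [TopologicalSpace G₂] [AddCommGroup G₂] [Module R G₂] [T2Space G₂]
    {e₁ : E₁ → S₁} {e₂ : E₂ → S₂} (he₁ : DenseRange e₁) (he₂ : DenseRange e₂) (q : E₁ → S₂)
    {A A' : S₁ →L[R] G₁} {B B' : S₁ →L[R] G₂} {C C' : S₂ →L[R] G₂}
    (hA : ∀ x, A (e₁ x) = A' (e₁ x)) (hB : ∀ x, B (e₁ x) + C (q x) = B' (e₁ x) + C' (q x))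
    (hC : ∀ y, C (e₂ y) = C' (e₂ y)) : A = A' ∧ B = B' ∧ C = C' := by
  obtain rfl : C = C' :=
    DFunLike.coe_injective <| he₂.equalizer C.continuous C'.continuous (funext hC)
  refine ⟨DFunLike.coe_injective <| he₁.equalizer A.continuous A'.continuous (funext hA),
    DFunLike.coe_injective <| he₁.equalizer B.continuous B'.continuous (funext fun x => ?_), rfl⟩
  exact add_right_cancel (hB x)

section LowerTriangular

variable {𝕜 H₁ H₂ S₁ S₂ K₁ K₂ : Type*} [RCLike 𝕜]
  [SeminormedAddCommGroup H₁] [NormedSpace 𝕜 H₁] [SeminormedAddCommGroup H₂] [NormedSpace 𝕜 H₂]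
  [NormedAddCommGroup S₁] [InnerProductSpace 𝕜 S₁] [NormedAddCommGroup S₂] [InnerProductSpace 𝕜 S₂]
  [NormedAddCommGroup K₁] [InnerProductSpace 𝕜 K₁] [CompleteSpace K₁]
  [NormedAddCommGroup K₂] [InnerProductSpace 𝕜 K₂] [CompleteSpace K₂]

theorem exists_lowerTriangular_isometry {e₁ : H₁ →L[𝕜] S₁} {e₂ : H₂ →L[𝕜] S₂}
    (he₁ : DenseRange e₁) (he₂ : DenseRange e₂) (q : H₁ →L[𝕜] S₂)
    (P' : H₁ →L[𝕜] K₁) (Q' : H₁ →L[𝕜] K₂) (R' : H₂ →L[𝕜] K₂)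
    (h11 : ∀ x, ‖e₁ x‖ ^ 2 + ‖q x‖ ^ 2 = ‖P' x‖ ^ 2 + ‖Q' x‖ ^ 2)
    (h21 : ∀ x y, ⟪q x, e₂ y⟫_𝕜 = ⟪Q' x, R' y⟫_𝕜) (h22 : ∀ y, ‖R' y‖ = ‖e₂ y‖) :
    ∃ (A : S₁ →L[𝕜] K₁) (B : S₁ →L[𝕜] K₂) (C : S₂ →ₗᵢ[𝕜] K₂),
      (∀ u w, ‖A u‖ ^ 2 + ‖B u + C w‖ ^ 2 = ‖u‖ ^ 2 + ‖w‖ ^ 2) ∧ (∀ x, A (e₁ x) = P' x) ∧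
      (∀ x, B (e₁ x) + C (q x) = Q' x) ∧ ∀ y, C (e₂ y) = R' y := by
  obtain ⟨C, hC⟩ := exists_linearIsometry_comp_eq_of_norm_eq he₂ R' h22
  have hcross : ∀ x w, ⟪q x, w⟫_𝕜 = ⟪Q' x, C w⟫_𝕜 := fun x w =>
    he₂.induction_on w (isClosed_eq (by fun_prop) (by fun_prop)) fun y => by rw [hC, h21]
  let D : H₁ →L[𝕜] K₂ := Q' - C.toContinuousLinearMap ∘L q
  have hD : ∀ x, ‖P' x‖ ^ 2 + ‖D x‖ ^ 2 = ‖e₁ x‖ ^ 2 := fun x => by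
    have hQ' : ‖Q' x‖ ^ 2 = ‖D x‖ ^ 2 + ‖q x‖ ^ 2 :=
      C.norm_sq_eq_norm_sub_map_sq_add_norm_sq (hcross x)
    linarith [h11 x]
  obtain ⟨A, B, hA, hB, hAB⟩ := exists_comp_eq_of_norm_sq_add_norm_sq_eq he₁ P' D hD
  have horth : ∀ u w, ⟪B u, C w⟫_𝕜 = 0 := fun u w =>
    he₁.induction_on u (isClosed_eq (by fun_prop) (by fun_prop)) fun x => by
      rw [hB]
      exact C.inner_sub_map_map_eq_zero (hcross x) w
  refine ⟨A, B, C, fun u w => ?_, hA, fun x => ?_, hC⟩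
  · have hsum := norm_add_sq (𝕜 := 𝕜) (B u) (C w)
    rw [horth, map_zero, mul_zero, add_zero, C.norm_map] at hsum
    linarith [hAB u]
  · rw [hB]
    exact sub_add_cancel _ _

end LowerTriangular

theorem unique_lower_triangular_isometry
    {H₁ H₂ K₁ K₂ K₁' K₂' : Type*}
    [NormedAddCommGroup H₁] [InnerProductSpace ℂ H₁] [CompleteSpace H₁]
    [NormedAddCommGroup H₂] [InnerProductSpace ℂ H₂] [CompleteSpace H₂]
    [NormedAddCommGroup K₁] [InnerProductSpace ℂ K₁] [CompleteSpace K₁]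
    [NormedAddCommGroup K₂] [InnerProductSpace ℂ K₂] [CompleteSpace K₂]
    [NormedAddCommGroup K₁'] [InnerProductSpace ℂ K₁'] [CompleteSpace K₁']
    [NormedAddCommGroup K₂'] [InnerProductSpace ℂ K₂'] [CompleteSpace K₂']
    (P : H₁ →L[ℂ] K₁) (Q : H₁ →L[ℂ] K₂) (R : H₂ →L[ℂ] K₂)
    (P' : H₁ →L[ℂ] K₁') (Q' : H₁ →L[ℂ] K₂') (R' : H₂ →L[ℂ] K₂')
    (h11 : P.adjoint ∘L P + Q.adjoint ∘L Q = P'.adjoint ∘L P' + Q'.adjoint ∘L Q')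
    (h21 : Q.adjoint ∘L R = Q'.adjoint ∘L R')
    (h22 : R.adjoint ∘L R = R'.adjoint ∘L R')
    (hQR : Set.range Q ⊆ closure (Set.range R)) :
    ∃! V : ((LinearMap.range (P : H₁ →ₗ[ℂ] K₁)).topologicalClosure →L[ℂ] K₁') ×
           ((LinearMap.range (P : H₁ →ₗ[ℂ] K₁)).topologicalClosure →L[ℂ] K₂') ×
           ((LinearMap.range (R : H₂ →ₗ[ℂ] K₂)).topologicalClosure →L[ℂ] K₂'),
      (∀ (u : (LinearMap.range (P : H₁ →ₗ[ℂ] K₁)).topologicalClosure)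
         (w : (LinearMap.range (R : H₂ →ₗ[ℂ] K₂)).topologicalClosure),
         ‖V.1 u‖ ^ 2 + ‖V.2.1 u + V.2.2 w‖ ^ 2 = ‖(u : K₁)‖ ^ 2 + ‖(w : K₂)‖ ^ 2) ∧
      (∀ x : H₁,
        V.1 ⟨P x, Submodule.le_topologicalClosure _ (LinearMap.mem_range_self _ x)⟩ = P' x) ∧
      (∀ x : H₁,
        V.2.1 ⟨P x, Submodule.le_topologicalClosure _ (LinearMap.mem_range_self _ x)⟩ +
          V.2.2 ⟨Q x, by
            have h := hQR ⟨x, rfl⟩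
            rwa [← SetLike.mem_coe, Submodule.topologicalClosure_coe,
              LinearMap.coe_range, ContinuousLinearMap.coe_coe]⟩ = Q' x) ∧
      (∀ y : H₂,
        V.2.2 ⟨R y, Submodule.le_topologicalClosure _ (LinearMap.mem_range_self _ y)⟩ = R' y) := by
  have hQ : ∀ x, Q x ∈ (LinearMap.range (R : H₂ →ₗ[ℂ] K₂)).topologicalClosure := fun x => by
    simpa only [← SetLike.mem_coe, Submodule.topologicalClosure_coe, LinearMap.coe_range,
      coe_coe] using hQR ⟨x, rfl⟩
  have hP := P.denseRange_rangeClosureRestrict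
  have hR := R.denseRange_rangeClosureRestrict
  have h11' := norm_sq_add_norm_sq_eq_of_adjoint_comp_add_eq h11
  have h21' := inner_apply_apply_eq_of_adjoint_comp_eq h21
  have h22' := norm_apply_eq_of_adjoint_comp_self_eq h22.symm
  obtain ⟨A, B, C, hV, hA, hB, hC⟩ := exists_lowerTriangular_isometry hP hR (Q.codRestrict _ hQ)
    P' Q' R' h11' h21' h22'
  refine existsUnique_of_exists_of_unique ⟨(A, B, C.toContinuousLinearMap), hV, hA, hB, hC⟩ ?_
  rintro ⟨A, B, C⟩ ⟨A', B', C'⟩ ⟨-, hA, hB, hC⟩ ⟨-, hA', hB', hC'⟩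
  obtain ⟨rfl, rfl, rfl⟩ := lowerTriangular_ext hP hR (Q.codRestrict _ hQ)
    (fun x => (hA x).trans (hA' x).symm) (fun x => (hB x).trans (hB' x).symm)
    fun y => (hC y).trans (hC' y).symm
  rfl
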